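/- arXiv:2109.07146 — 2 statements merged into one kernel-verified Lean document; each statement's English description precedes it below -/
import Mathlib

section
/- Let M ≥ 2 be an integer. For every Φ ∈ ℝ^M one has ‖Φ − [Φ]_M·(1,…,1)‖_{2,M} ≤ ‖Δ_M Φ‖_{2,M}, i.e. the rescaled ℓ² norm of the projection of Φ onto the mean-zero subspace is bounded by the rescaled ℓ² norm of Δ_M Φ (discrete Poincaré–Wirtinger inequality). -/
open MeasureTheory Matrix Polynomial Set

noncomputable section

/-- Cyclic shift of an index of `Fin M` by an integer `k` (indices modulo `M`). -/
def cyc {M : ℕ} (i : Fin M) (k : ℤ) : Fin M :=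
  ⟨((((i : ℕ) : ℤ) + k) % (M : ℤ)).toNat, by
    have hM : 0 < M := i.pos
    have hM' : (0 : ℤ) < (M : ℤ) := by exact_mod_cast hM
    have h1 : 0 ≤ ((((i : ℕ) : ℤ) + k) % (M : ℤ)) := Int.emod_nonneg _ hM'.ne'
    have h2 : ((((i : ℕ) : ℤ) + k) % (M : ℤ)) < (M : ℤ) := Int.emod_lt_of_pos _ hM'
    omega⟩

/-- The periodic discrete Laplacian `Δ_M`, acting on vectors:
`(Δ_M u)_i = M² (u_{i+1} + u_{i-1} - 2 u_i)`, indices modulo `M`. -/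
def discLap (M : ℕ) (u : Fin M → ℝ) : Fin M → ℝ :=
  fun i => (M : ℝ) ^ 2 * (u (cyc i 1) + u (cyc i (-1)) - 2 * u i)

/-- The mean `[u]_M = (1/M) ∑ᵢ uᵢ`. -/
def meanM (M : ℕ) (u : Fin M → ℝ) : ℝ := (1 / (M : ℝ)) * ∑ i, u i

/-- The rescaled inner product `(u|v)_M = (1/M) ∑ᵢ uᵢ vᵢ`. -/
def innerM (M : ℕ) (u v : Fin M → ℝ) : ℝ := (1 / (M : ℝ)) * ∑ i, u i * v i

/-- The rescaled ℓ² norm `‖u‖_{2,M} = ((1/M) ∑ᵢ uᵢ²)^{1/2}`. -/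
def norm2M (M : ℕ) (u : Fin M → ℝ) : ℝ := Real.sqrt ((1 / (M : ℝ)) * ∑ i, (u i) ^ 2)

/-- Projection onto the mean-zero subspace: `ũ = u - [u]_M 𝟙`. -/
def tilde (M : ℕ) (u : Fin M → ℝ) : Fin M → ℝ := fun i => u i - meanM M u

open scoped Classical in
/-- The inverse of the discrete Laplacian on the mean-zero subspace:
for mean-zero `w`, the unique mean-zero `Φ` with `Δ_M Φ = w`. -/
def discLapInv (M : ℕ) (w : Fin M → ℝ) : Fin M → ℝ :=
  if h : ∃ Φ : Fin M → ℝ, meanM M Φ = 0 ∧ discLap M Φ = w then h.choose else 0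

/-- The discrete negative Sobolev norm `‖u‖_{-1,M} = (-(ũ|Δ_M⁻¹ũ)_M + [u]_M²)^{1/2}`. -/
def normNeg1M (M : ℕ) (u : Fin M → ℝ) : ℝ :=
  Real.sqrt (-(innerM M (tilde M u) (discLapInv M (tilde M u))) + (meanM M u) ^ 2)

/-- The matrix of the periodic discrete Laplacian `Δ_M`. -/
def discLapMatrix (M : ℕ) : Matrix (Fin M) (Fin M) ℝ :=
  fun i j => (M : ℝ) ^ 2 *
    ((if j = cyc i 1 then (1 : ℝ) else 0) + (if j = cyc i (-1) then 1 else 0)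
      - 2 * (if j = i then 1 else 0))

/-- The periodic adjacency matrix `J_M`. -/
def JMatrix (M : ℕ) : Matrix (Fin M) (Fin M) ℝ :=
  fun i j => (if j = cyc i 1 then (1 : ℝ) else 0) + (if j = cyc i (-1) then 1 else 0)

/-- The circulant matrix `B_M = (2/3) I + (1/6) J_M`. -/
def BMatrix (M : ℕ) : Matrix (Fin M) (Fin M) ℝ :=
  fun i j => (2 / 3) * (if j = i then (1 : ℝ) else 0) + (1 / 6) * JMatrix M i j

/-- The 1-periodic step reconstruction `σ_M(u)`, equal to `u_k` on `[(k-1)/M, k/M)`. -/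
def sigmaRec (M : ℕ) (u : Fin M → ℝ) (x : ℝ) : ℝ :=
  if h : 0 < M then u (cyc (⟨0, h⟩ : Fin M) ⌊(M : ℝ) * x⌋) else 0

/-- The 1-periodic continuous piecewise affine reconstruction `π_M(u)`, with
`π_M(u)(k/M) = u_k`, affine on each interval `[(k-1)/M, k/M]`. -/
def piRec (M : ℕ) (u : Fin M → ℝ) (x : ℝ) : ℝ :=
  if h : 0 < M then
    (1 - Int.fract ((M : ℝ) * x)) * u (cyc (⟨0, h⟩ : Fin M) (⌊(M : ℝ) * x⌋ - 1))
      + Int.fract ((M : ℝ) * x) * u (cyc (⟨0, h⟩ : Fin M) ⌊(M : ℝ) * x⌋)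
  else 0

/-- The a.e. derivative of `π_M(u)`: equal to `M (u_k - u_{k-1})` on `((k-1)/M, k/M)`. -/
def gDeriv (M : ℕ) (u : Fin M → ℝ) (x : ℝ) : ℝ :=
  if h : 0 < M then
    (M : ℝ) * (u (cyc (⟨0, h⟩ : Fin M) ⌊(M : ℝ) * x⌋)
      - u (cyc (⟨0, h⟩ : Fin M) (⌊(M : ℝ) * x⌋ - 1)))
  else 0

/-- The 1-periodic kernel `ρ_M`, equal to `M` on `[0, 1/M)` and `0` on `[1/M, 1)`. -/
def rhoM (M : ℕ) (y : ℝ) : ℝ := if Int.fract y < 1 / (M : ℝ) then (M : ℝ) else 0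

/-- The `k`-th Fourier coefficient `c_k(f) = ∫₀¹ f(x) e^{-2πikx} dx` of a 1-periodic
function. -/
def fCoeff (f : ℝ → ℝ) (k : ℤ) : ℂ :=
  ∫ x in (0 : ℝ)..1, (f x : ℂ) *
    Complex.exp (-(2 * (Real.pi : ℂ) * Complex.I * (k : ℂ) * (x : ℂ)))

/-- The `H^{-1}(𝕋)` norm `(∑_k |c_k(f)|² (1+k²)^{-1})^{1/2}`. -/
def Hm1Norm (f : ℝ → ℝ) : ℝ :=
  Real.sqrt (∑' k : ℤ, ‖fCoeff f k‖ ^ 2 * ((1 : ℝ) + (k : ℝ) ^ 2)⁻¹)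

/-- The `L²(𝕋)` norm `(∫₀¹ f²)^{1/2}`. -/
def L2Norm01 (f : ℝ → ℝ) : ℝ := Real.sqrt (∫ x in (0 : ℝ)..1, (f x) ^ 2)

end


section PWaux

variable {M : ℕ}

private lemma toNat_natMod (a : ℕ) : (((a : ℤ)) % (M : ℤ)).toNat = a % M := by
  rw [← Int.natCast_emod, Int.toNat_natCast]

private lemma cyc_nat (hM : 0 < M) (i : Fin M) (n : ℕ) :
    cyc i (n : ℤ) = ⟨(i.val + n) % M, Nat.mod_lt _ hM⟩ := by
  apply Fin.ext
  show ((((i : ℕ) : ℤ) + (n : ℤ)) % (M : ℤ)).toNat = (i.val + n) % M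
  rw [show (((i : ℕ) : ℤ) + (n : ℤ)) = ((i.val + n : ℕ) : ℤ) by push_cast; ring,
    toNat_natMod]

private lemma cyc_one (hM : 0 < M) (i : Fin M) :
    cyc i 1 = ⟨(i.val + 1) % M, Nat.mod_lt _ hM⟩ := by
  rw [show ((1 : ℤ)) = ((1 : ℕ) : ℤ) by norm_num, cyc_nat hM]

private lemma cyc_neg_one (hM : 0 < M) (i : Fin M) :
    cyc i (-1) = ⟨(i.val + (M - 1)) % M, Nat.mod_lt _ hM⟩ := by
  apply Fin.ext
  show ((((i : ℕ) : ℤ) + (-1)) % (M : ℤ)).toNat = (i.val + (M - 1)) % M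
  have h1 : (((i : ℕ) : ℤ) + (-1)) % (M : ℤ) = (((i : ℕ) : ℤ) + (-1) + M) % (M : ℤ) := by
    conv_rhs => rw [show (((i : ℕ) : ℤ) + (-1) + M) = (((i : ℕ) : ℤ) + (-1)) + M * 1 by ring]
    rw [Int.add_mul_emod_self_left]
  have h2 : (((i : ℕ) : ℤ) + (-1) + M) = ((i.val + (M - 1) : ℕ) : ℤ) := by
    have h1' : (1 : ℕ) ≤ M := hM
    push_cast [Nat.cast_sub h1']
    ring
  rw [h1, h2, toNat_natMod]

private lemma cyc_one_neg_one (hM : 0 < M) (i : Fin M) : cyc (cyc i 1) (-1) = i := by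
  rw [cyc_one hM, cyc_neg_one hM]
  apply Fin.ext
  show ((i.val + 1) % M + (M - 1)) % M = i.val
  have hlt := i.isLt
  rcases Nat.lt_or_ge (i.val + 1) M with h | h
  · rw [Nat.mod_eq_of_lt h, show i.val + 1 + (M - 1) = i.val + M by omega,
      Nat.add_mod_right, Nat.mod_eq_of_lt hlt]
  · have h1 : i.val + 1 = M := by omega
    rw [h1, Nat.mod_self, Nat.zero_add, Nat.mod_eq_of_lt (by omega)]
    omega

private lemma cyc_neg_one_one (hM : 0 < M) (i : Fin M) : cyc (cyc i (-1)) 1 = i := by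
  rw [cyc_neg_one hM, cyc_one hM]
  apply Fin.ext
  show ((i.val + (M - 1)) % M + 1) % M = i.val
  have hlt := i.isLt
  rcases Nat.eq_zero_or_pos i.val with h | h
  · have h1 : (M - 1) % M = M - 1 := Nat.mod_eq_of_lt (by omega)
    rw [h, Nat.zero_add, h1, show M - 1 + 1 = M by omega, Nat.mod_self]
  · have h1 : (i.val - 1) % M = i.val - 1 := Nat.mod_eq_of_lt (by omega)
    rw [show i.val + (M - 1) = i.val - 1 + M by omega, Nat.add_mod_right, h1,
      show i.val - 1 + 1 = i.val by omega, Nat.mod_eq_of_lt hlt]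

/-- The cyclic shift as a permutation. -/
private def cycEquiv (hM : 0 < M) : Equiv.Perm (Fin M) :=
  ⟨fun i => cyc i 1, fun i => cyc i (-1), cyc_one_neg_one hM, cyc_neg_one_one hM⟩

private lemma sum_comp_cyc_one (hM : 0 < M) (F : Fin M → ℝ) :
    ∑ i : Fin M, F (cyc i 1) = ∑ i : Fin M, F i :=
  Equiv.sum_comp (cycEquiv hM) F

end PWaux

/-- the discrete Poincaré–Wirtinger inequality
(Proposition 4.11 / `prop:pw` of the paper). -/
theorem discrete_poincare_wirtinger (M : ℕ) (hM : 2 ≤ M) (Φ : Fin M → ℝ) :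
    norm2M M (tilde M Φ) ≤ norm2M M (discLap M Φ) := by
  have hM0 : 0 < M := by omega
  have hMR : (0 : ℝ) < M := by exact_mod_cast hM0
  set v : Fin M → ℝ := tilde M Φ with hv
  have hA0 : (0:ℝ) ≤ ∑ i, v i ^ 2 := Finset.sum_nonneg fun i _ => sq_nonneg _
  have hB0 : (0:ℝ) ≤ ∑ i, (discLap M Φ i) ^ 2 := Finset.sum_nonneg fun i _ => sq_nonneg _
  have hD0 : (0:ℝ) ≤ ∑ i : Fin M, (v (cyc i 1) - v i) ^ 2 :=
    Finset.sum_nonneg fun i _ => sq_nonneg _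
  -- the mean of v is zero
  have hsum : ∑ i, v i = 0 := by
    simp only [hv, tilde, meanM, Finset.sum_sub_distrib, Finset.sum_const, Finset.card_univ,
      Fintype.card_fin, nsmul_eq_mul]
    field_simp
    ring
  -- discLap of v equals discLap of Φ
  have hΔ : ∀ i, discLap M v i = discLap M Φ i := by
    intro i
    simp only [hv, tilde, discLap]
    ring
  -- reindexing identities
  have e1 : ∑ i : Fin M, v (cyc i 1) ^ 2 = ∑ i, v i ^ 2 :=
    sum_comp_cyc_one hM0 (fun j => v j ^ 2)
  have e2 : ∑ i : Fin M, v i * v (cyc i (-1)) = ∑ i : Fin M, v i * v (cyc i 1) := by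
    have h := sum_comp_cyc_one hM0 (fun j => v j * v (cyc j (-1)))
    calc ∑ i : Fin M, v i * v (cyc i (-1))
        = ∑ i : Fin M, v (cyc i 1) * v (cyc (cyc i 1) (-1)) := h.symm
      _ = ∑ i : Fin M, v i * v (cyc i 1) := by
          refine Finset.sum_congr rfl fun i _ => ?_
          rw [cyc_one_neg_one hM0, mul_comm]
  -- summation by parts
  have hparts : ∑ i, v i * discLap M v i
      = -((M : ℝ) ^ 2 * ∑ i : Fin M, (v (cyc i 1) - v i) ^ 2) := by
    have step1 : ∑ i, v i * discLap M v i
        = (M : ℝ) ^ 2 * (∑ i, v i * v (cyc i 1)) + (M : ℝ) ^ 2 * (∑ i, v i * v (cyc i (-1)))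
          - 2 * (M : ℝ) ^ 2 * (∑ i, v i ^ 2) := by
      rw [Finset.mul_sum, Finset.mul_sum, Finset.mul_sum, ← Finset.sum_add_distrib,
        ← Finset.sum_sub_distrib]
      refine Finset.sum_congr rfl fun i _ => ?_
      simp only [discLap]
      ring
    have step2 : ∑ i : Fin M, (v (cyc i 1) - v i) ^ 2
        = 2 * (∑ i, v i ^ 2) - 2 * (∑ i, v i * v (cyc i 1)) := by
      calc ∑ i : Fin M, (v (cyc i 1) - v i) ^ 2
          = ∑ i : Fin M, (v (cyc i 1) ^ 2 + v i ^ 2 - 2 * (v i * v (cyc i 1))) :=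
            Finset.sum_congr rfl fun i _ => by ring
        _ = (∑ i : Fin M, v (cyc i 1) ^ 2) + (∑ i, v i ^ 2)
            - 2 * (∑ i, v i * v (cyc i 1)) := by
            rw [Finset.sum_sub_distrib, Finset.sum_add_distrib, ← Finset.mul_sum]
        _ = 2 * (∑ i, v i ^ 2) - 2 * (∑ i, v i * v (cyc i 1)) := by rw [e1]; ring
    rw [step1, step2, e2]
    ring
  -- path bound: (v i - v j)^2 ≤ M * Dfin
  have hpath : ∀ i j : Fin M, (v i - v j) ^ 2
      ≤ (M : ℝ) * ∑ i : Fin M, (v (cyc i 1) - v i) ^ 2 := by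
    have key : ∀ i j : Fin M, i.val ≤ j.val →
        (v j - v i) ^ 2 ≤ (M : ℝ) * ∑ i : Fin M, (v (cyc i 1) - v i) ^ 2 := by
      intro i j hij
      set f : ℕ → ℝ := fun k => v (cyc (⟨0, hM0⟩ : Fin M) (k : ℕ)) with hf
      set g : ℕ → ℝ := fun k => f (k + 1) - f k with hg
      have hfval : ∀ k : Fin M, f k.val = v k := by
        intro k
        have h2 : cyc (⟨0, hM0⟩ : Fin M) ((k.val : ℕ) : ℤ) = k := by
          rw [cyc_nat hM0]
          apply Fin.ext
          show (0 + k.val) % M = k.val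
          rw [Nat.zero_add, Nat.mod_eq_of_lt k.isLt]
        simp only [hf, h2]
      have tele : ∑ k ∈ Finset.Ico i.val j.val, g k = v j - v i := by
        rw [Finset.sum_Ico_eq_sub _ hij]
        simp only [hg]
        rw [Finset.sum_range_sub f, Finset.sum_range_sub f, hfval i, hfval j]
        ring
      have hDg : ∑ k ∈ Finset.range M, g k ^ 2
          = ∑ i : Fin M, (v (cyc i 1) - v i) ^ 2 := by
        rw [← Fin.sum_univ_eq_sum_range (fun k => g k ^ 2)]
        refine Finset.sum_congr rfl fun k _ => ?_
        have h1 : cyc (⟨0, hM0⟩ : Fin M) ((k.val + 1 : ℕ) : ℤ) = cyc k 1 := by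
          rw [cyc_nat hM0, cyc_one hM0]
          apply Fin.ext
          show (0 + (k.val + 1)) % M = (k.val + 1) % M
          rw [Nat.zero_add]
        have h2 : cyc (⟨0, hM0⟩ : Fin M) ((k.val : ℕ) : ℤ) = k := by
          rw [cyc_nat hM0]
          apply Fin.ext
          show (0 + k.val) % M = k.val
          rw [Nat.zero_add, Nat.mod_eq_of_lt k.isLt]
        have hgval : g k.val = v (cyc k 1) - v k := by
          simp only [hg, hf]
          rw [h1, h2]
        rw [hgval]
      have cs : (v j - v i) ^ 2 ≤ ((Finset.Ico i.val j.val).card : ℝ)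
          * ∑ k ∈ Finset.Ico i.val j.val, g k ^ 2 := by
        rw [← tele]
        exact sq_sum_le_card_mul_sum_sq
      have hcard : ((Finset.Ico i.val j.val).card : ℝ) ≤ (M : ℝ) := by
        rw [Nat.card_Ico]
        exact_mod_cast le_trans (Nat.sub_le _ _) (le_of_lt j.isLt)
      have hsub : ∑ k ∈ Finset.Ico i.val j.val, g k ^ 2
          ≤ ∑ k ∈ Finset.range M, g k ^ 2 := by
        refine Finset.sum_le_sum_of_subset_of_nonneg ?_ (fun k _ _ => sq_nonneg _)
        intro k hk
        simp only [Finset.mem_Ico] at hk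
        simp only [Finset.mem_range]
        exact lt_of_lt_of_le hk.2 (le_of_lt j.isLt)
      calc (v j - v i) ^ 2
          ≤ ((Finset.Ico i.val j.val).card : ℝ) * ∑ k ∈ Finset.Ico i.val j.val, g k ^ 2 := cs
        _ ≤ (M : ℝ) * ∑ k ∈ Finset.range M, g k ^ 2 :=
            mul_le_mul hcard hsub (Finset.sum_nonneg fun k _ => sq_nonneg _) (le_of_lt hMR)
        _ = (M : ℝ) * ∑ i : Fin M, (v (cyc i 1) - v i) ^ 2 := by rw [hDg]
    intro i j
    rcases le_total i.val j.val with h | h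
    · rw [show (v i - v j) ^ 2 = (v j - v i) ^ 2 by ring]
      exact key i j h
    · exact key j i h
  -- mean zero double sum identity
  have hdouble : ∑ i : Fin M, ∑ j : Fin M, (v i - v j) ^ 2
      = 2 * (M : ℝ) * ∑ i, v i ^ 2 := by
    have hrow : ∀ i : Fin M, ∑ j : Fin M, (v i - v j) ^ 2
        = (M : ℝ) * v i ^ 2 + (∑ j, v j ^ 2) - 2 * (v i * ∑ j, v j) := by
      intro i
      calc ∑ j : Fin M, (v i - v j) ^ 2
          = ∑ j : Fin M, (v i ^ 2 + v j ^ 2 - 2 * (v i * v j)) :=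
            Finset.sum_congr rfl fun j _ => by ring
        _ = (∑ _j : Fin M, v i ^ 2) + (∑ j, v j ^ 2) - ∑ j, 2 * (v i * v j) := by
            rw [Finset.sum_sub_distrib, Finset.sum_add_distrib]
        _ = (M : ℝ) * v i ^ 2 + (∑ j, v j ^ 2) - 2 * (v i * ∑ j, v j) := by
            rw [Finset.sum_const, Finset.card_univ, Fintype.card_fin, nsmul_eq_mul,
              Finset.mul_sum, Finset.mul_sum]
    calc ∑ i : Fin M, ∑ j : Fin M, (v i - v j) ^ 2
        = ∑ i : Fin M, ((M : ℝ) * v i ^ 2 + (∑ j, v j ^ 2) - 2 * (v i * ∑ j, v j)) :=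
          Finset.sum_congr rfl fun i _ => hrow i
      _ = 2 * (M : ℝ) * ∑ i, v i ^ 2 := by
          rw [hsum]
          simp only [mul_zero, sub_zero]
          rw [Finset.sum_add_distrib, ← Finset.mul_sum, Finset.sum_const, Finset.card_univ,
            Fintype.card_fin, nsmul_eq_mul]
          ring
  -- Poincaré with gradient: 2 A ≤ M^2 Dfin
  have hpoin : 2 * (∑ i, v i ^ 2)
      ≤ (M : ℝ) ^ 2 * ∑ i : Fin M, (v (cyc i 1) - v i) ^ 2 := by
    have hb : ∑ i : Fin M, ∑ j : Fin M, (v i - v j) ^ 2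
        ≤ (M : ℝ) * ((M : ℝ) * ((M : ℝ) * ∑ i : Fin M, (v (cyc i 1) - v i) ^ 2)) := by
      calc ∑ i : Fin M, ∑ j : Fin M, (v i - v j) ^ 2
          ≤ ∑ _i : Fin M, ∑ _j : Fin M,
              (M : ℝ) * ∑ i : Fin M, (v (cyc i 1) - v i) ^ 2 :=
            Finset.sum_le_sum fun i _ => Finset.sum_le_sum fun j _ => hpath i j
        _ = (M : ℝ) * ((M : ℝ) * ((M : ℝ) * ∑ i : Fin M, (v (cyc i 1) - v i) ^ 2)) := by
            simp [Finset.sum_const, Finset.card_univ, Fintype.card_fin, nsmul_eq_mul]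
    rw [hdouble] at hb
    have h2 : (M : ℝ) * (2 * ∑ i, v i ^ 2)
        ≤ (M : ℝ) * ((M : ℝ) ^ 2 * ∑ i : Fin M, (v (cyc i 1) - v i) ^ 2) := by
      nlinarith
    exact le_of_mul_le_mul_left h2 hMR
  -- combine with Cauchy-Schwarz
  have hkey : 2 * (∑ i, v i ^ 2) ≤ -(∑ i, v i * discLap M Φ i) := by
    have h : ∑ i, v i * discLap M Φ i = ∑ i, v i * discLap M v i :=
      Finset.sum_congr rfl fun i _ => by rw [hΔ i]
    rw [h, hparts]
    linarith
  have hcs : (∑ i, v i * discLap M Φ i) ^ 2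
      ≤ (∑ i, v i ^ 2) * (∑ i, (discLap M Φ i) ^ 2) :=
    Finset.sum_mul_sq_le_sq_mul_sq _ _ _
  have hAB : (∑ i, v i ^ 2) ≤ ∑ i, (discLap M Φ i) ^ 2 := by
    nlinarith
  -- conclude
  simp only [norm2M]
  apply Real.sqrt_le_sqrt
  exact mul_le_mul_of_nonneg_left hAB (by positivity)
end

section
/- Let M ≥ 2 be an integer. Every nonzero eigenvalue λ of the matrix −Δ_M satisfies λ ≥ 16. -/
open MeasureTheory Matrix Polynomial Set

set_option linter.unusedSectionVars false

section Aux
variable {M : ℕ} [NeZero M]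

/-- bridge: Fin M → ZMod M and back -/
def zdown (a : ZMod M) : Fin M := ⟨a.val, a.val_lt⟩

lemma zdown_cast (a : ZMod M) : ((zdown a : Fin M) : ℕ) = a.val := rfl

lemma cyc_eq_zdown (i : Fin M) (k : ℤ) :
    cyc i k = zdown ((((i : ℕ) : ℤ) + k : ℤ) : ZMod M) := by
  apply Fin.ext
  show ((((i : ℕ) : ℤ) + k) % (M : ℤ)).toNat = ZMod.val _
  have h : (ZMod.val ((((i : ℕ) : ℤ) + k : ℤ) : ZMod M) : ℤ) = (((i : ℕ) : ℤ) + k) % (M : ℤ) :=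
    ZMod.val_intCast _
  omega

lemma zdown_up (i : Fin M) : zdown (((i : ℕ) : ZMod M)) = i := by
  apply Fin.ext
  show ZMod.val _ = _
  exact ZMod.val_natCast_of_lt i.isLt

lemma up_zdown (a : ZMod M) : (((zdown a : Fin M) : ℕ) : ZMod M) = a := ZMod.natCast_zmod_val a

lemma mulVec_neg_discLap (u : Fin M → ℝ) (i : Fin M) :
    ((-(discLapMatrix M)) *ᵥ u) i
      = (M : ℝ) ^ 2 * (2 * u i - u (cyc i 1) - u (cyc i (-1))) := by
  simp only [Matrix.mulVec, dotProduct, Matrix.neg_apply, discLapMatrix]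
  have : ∀ j : Fin M, -((M : ℝ) ^ 2 *
      ((if j = cyc i 1 then (1 : ℝ) else 0) + (if j = cyc i (-1) then 1 else 0)
        - 2 * (if j = i then 1 else 0))) * u j
      = (M : ℝ) ^ 2 * (2 * (if j = i then u j else 0)
        - (if j = cyc i 1 then u j else 0) - (if j = cyc i (-1) then u j else 0)) := by
    intro j; split_ifs <;> ring
  rw [Finset.sum_congr rfl fun j _ => this j, ← Finset.mul_sum]
  congr 1
  rw [Finset.sum_sub_distrib, Finset.sum_sub_distrib, ← Finset.mul_sum]
  simp [Finset.sum_ite_eq' Finset.univ]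

open ZMod in
lemma dft_shift (V : ZMod M → ℂ) (t k : ZMod M) :
    dft (fun a => V (a + t)) k = stdAddChar (t * k) * dft V k := by
  rw [dft_apply, dft_apply]
  rw [← Fintype.sum_equiv (Equiv.subRight t) _ (fun a => stdAddChar (-(a * k)) • V (a + t))
    (fun b => rfl)]
  simp only [Equiv.subRight_apply, sub_add_cancel, smul_eq_mul, Finset.mul_sum]
  refine Finset.sum_congr rfl fun b _ => ?_
  have : (-((b - t) * k)) = t * k + -(b * k) := by ring
  rw [this, AddChar.map_add_eq_mul]
  ring

open ZMod in
lemma key_eq (u : Fin M → ℝ) (lam : ℝ)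
    (heig : (-(discLapMatrix M)) *ᵥ u = lam • u) (k : ZMod M)
    (hk : dft (fun a => (u (zdown a) : ℂ)) k ≠ 0) :
    (lam : ℂ) = (M : ℂ) ^ 2 * (2 - stdAddChar k - stdAddChar (-k)) := by
  set U : ZMod M → ℂ := fun a => (u (zdown a) : ℂ) with hU
  have hcyc : ∀ (a : ZMod M) (t : ℤ), u (cyc (zdown a) t) = u (zdown (a + t)) := by
    intro a t
    rw [cyc_eq_zdown]
    congr 1
    push_cast
    rw [up_zdown]
  have hpt : ∀ a : ZMod M, (M : ℂ) ^ 2 * (2 * U a - U (a + 1) - U (a - 1)) = lam * U a := by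
    intro a
    have h1 := congrFun heig (zdown a)
    rw [mulVec_neg_discLap] at h1
    simp only [Pi.smul_apply, smul_eq_mul] at h1
    rw [hcyc a 1, hcyc a (-1)] at h1
    have : a + ((-1 : ℤ) : ZMod M) = a - 1 := by push_cast; ring
    rw [this] at h1
    have : a + ((1 : ℤ) : ZMod M) = a + 1 := by push_cast; ring
    rw [this] at h1
    have h2 := congrArg (fun x : ℝ => (x : ℂ)) h1
    push_cast at h2
    exact h2
  -- apply dft to both sides
  have hdft : (M : ℂ) ^ 2 * (2 * dft U k - stdAddChar k * dft U k
      - stdAddChar (-k) * dft U k) = lam * dft U k := by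
    have := congrFun (congrArg dft (funext hpt : (fun a => (M : ℂ) ^ 2 *
      (2 * U a - U (a + 1) - U (a - 1))) = fun a => lam * U a)) k
    rw [show (fun a => (M : ℂ) ^ 2 * (2 * U a - U (a + 1) - U (a - 1)))
        = (M : ℂ) ^ 2 • ((2 : ℂ) • U - (fun a => U (a + 1)) - fun a => U (a - 1)) from rfl] at this
    rw [show (fun a => (lam : ℂ) * U a) = (lam : ℂ) • U from rfl] at this
    rw [_root_.map_smul, _root_.map_smul] at this
    simp only [map_sub, _root_.map_smul, Pi.smul_apply, Pi.sub_apply, smul_eq_mul] at this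
    simp only [sub_eq_add_neg] at this
    rw [show (fun a => U (a + 1)) = fun a => U (a + (1 : ZMod M)) from rfl] at this
    rw [show (fun a => U (a + -1)) = fun a => U (a + (-1 : ZMod M)) from rfl] at this
    rw [dft_shift U 1 k, dft_shift U (-1) k] at this
    rw [one_mul, neg_one_mul] at this
    linear_combination this
  have := mul_right_cancel₀ hk (by linear_combination hdft :
    ((M : ℂ) ^ 2 * (2 - stdAddChar k - stdAddChar (-k))) * dft U k = (lam : ℂ) * dft U k)
  exact this.symm
end Aux

/-- every nonzero eigenvalue of `-Δ_M` is at least `16`. -/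
theorem neg_discLap_eigenvalue_lower_bound (M : ℕ) (hM : 2 ≤ M)
    (lam : ℝ) (u : Fin M → ℝ) (hu : u ≠ 0)
    (heig : (-(discLapMatrix M)) *ᵥ u = lam • u) (hlam : lam ≠ 0) :
    16 ≤ lam := by
  haveI : NeZero M := ⟨by omega⟩
  set U : ZMod M → ℂ := fun a => (u (zdown a) : ℂ) with hUdef
  have hUne : U ≠ 0 := by
    intro h
    apply hu
    funext i
    have h1 := congrFun h (((i : ℕ) : ZMod M))
    simp only [hUdef, Pi.zero_apply] at h1
    have h2 : u (zdown (((i : ℕ) : ZMod M))) = 0 := by exact_mod_cast h1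
    rwa [zdown_up] at h2
  obtain ⟨k, hk⟩ : ∃ k, ZMod.dft U k ≠ 0 := by
    by_contra h
    push_neg at h
    exact hUne ((LinearEquiv.map_eq_zero_iff _).mp (funext fun k => h k))
  have hlamC := key_eq u lam heig k hk
  have hk0 : k ≠ 0 := by
    intro h
    subst h
    rw [neg_zero, AddChar.map_zero_eq_one] at hlamC
    apply hlam
    have : (lam : ℂ) = 0 := by rw [hlamC]; ring
    exact_mod_cast this
  set v : ℕ := k.val with hv
  have hv1 : 1 ≤ v := Nat.one_le_iff_ne_zero.mpr (fun h => hk0 ((ZMod.val_eq_zero k).mp h))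
  have hvM : v < M := ZMod.val_lt k
  have hkcast : k = ((v : ℤ) : ZMod M) := by
    push_cast
    rw [hv, ZMod.natCast_zmod_val]
  have hχ1 : ZMod.stdAddChar k
      = Complex.exp (2 * Real.pi * Complex.I * v / M) := by
    rw [hkcast, ZMod.stdAddChar_coe]
    norm_num
  have hχ2 : ZMod.stdAddChar (-k)
      = Complex.exp (-(2 * Real.pi * Complex.I * v / M)) := by
    rw [hkcast, ← Int.cast_neg, ZMod.stdAddChar_coe]
    congr 1
    push_cast
    ring
  set θ : ℝ := 2 * Real.pi * v / M with hθ
  have harg : (2 * Real.pi * Complex.I * v / M : ℂ) = (θ : ℂ) * Complex.I := by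
    rw [hθ]
    push_cast
    ring
  have hsum : ZMod.stdAddChar k + ZMod.stdAddChar (-k) = 2 * (Real.cos θ : ℂ) := by
    rw [hχ1, hχ2, harg, ← neg_mul, ← Complex.two_cos, Complex.ofReal_cos]
  have hlamR : lam = (M : ℝ) ^ 2 * (2 - 2 * Real.cos θ) := by
    have : (lam : ℂ) = (((M : ℝ) ^ 2 * (2 - 2 * Real.cos θ) : ℝ) : ℂ) := by
      rw [hlamC]
      rw [Complex.ofReal_cos] at hsum
      push_cast
      linear_combination -((M : ℂ) ^ 2) * hsum
    exact_mod_cast this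
  have hsinlam : lam = 4 * (M : ℝ) ^ 2 * Real.sin (Real.pi * v / M) ^ 2 := by
    have h2θ : 2 * (Real.pi * v / M) = θ := by rw [hθ]; ring
    have := Real.sin_sq_eq_half_sub (Real.pi * v / M)
    rw [h2θ] at this
    rw [hlamR]
    linarith [mul_le_mul_of_nonneg_left (le_refl (0:ℝ)) (le_refl (0:ℝ)),
      congrArg (fun x => 4 * (M:ℝ)^2 * x) this]
  have hMpos : (0 : ℝ) < M := by positivity
  have hsin : 2 / (M : ℝ) ≤ Real.sin (Real.pi * v / M) := by
    have hπ := Real.pi_pos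
    rcases le_or_gt (2 * v) M with h | h
    · have hle : Real.pi * v / M ≤ Real.pi / 2 := by
        rw [div_le_div_iff₀ hMpos (by norm_num)]
        have : (2 * v : ℝ) ≤ M := by exact_mod_cast h
        nlinarith
      have h0 : (0 : ℝ) ≤ Real.pi * v / M := by positivity
      have := Real.mul_le_sin h0 hle
      have heq : 2 / Real.pi * (Real.pi * v / M) = 2 * v / M := by
        field_simp
      rw [heq] at this
      refine le_trans ?_ this
      have : (1 : ℝ) ≤ v := by exact_mod_cast hv1
      rw [div_le_div_iff₀ hMpos hMpos]
      nlinarith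
    · rw [show Real.pi * v / M = Real.pi - Real.pi * (M - v) / M by field_simp; ring,
        Real.sin_pi_sub]
      have hwv : (1 : ℝ) ≤ (M : ℝ) - v := by
        have : v + 1 ≤ M := hvM
        have : (v : ℝ) + 1 ≤ M := by exact_mod_cast this
        linarith
      have hle : Real.pi * ((M : ℝ) - v) / M ≤ Real.pi / 2 := by
        rw [div_le_div_iff₀ hMpos (by norm_num)]
        have : (M : ℝ) < 2 * v := by exact_mod_cast h
        nlinarith
      have h0 : (0 : ℝ) ≤ Real.pi * ((M : ℝ) - v) / M := by positivity
      have := Real.mul_le_sin h0 hle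
      have heq : 2 / Real.pi * (Real.pi * ((M : ℝ) - v) / M) = 2 * ((M : ℝ) - v) / M := by
        field_simp
      rw [heq] at this
      refine le_trans ?_ this
      rw [div_le_div_iff₀ hMpos hMpos]
      nlinarith
  have hsq : (2 / (M : ℝ)) ^ 2 ≤ Real.sin (Real.pi * v / M) ^ 2 := by
    have h0 : (0 : ℝ) ≤ 2 / (M : ℝ) := by positivity
    exact pow_le_pow_left₀ h0 hsin 2
  rw [hsinlam]
  have : 4 * (M : ℝ) ^ 2 * (2 / (M : ℝ)) ^ 2 = 16 := by field_simp; ring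
  nlinarith [hsq, sq_nonneg ((M:ℝ))]
end
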